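/- Every non-copying first-order transduction T is subsumed by a non-copying transduction T' whose associated interpretation is of the form (M(x), η'(x,y)), where M is a unary relation symbol and η' is a local formula. -/

import Mathlib

open SimpleGraph

/-! ### Finite graphs and colored graphs -/

/-- A finite simple graph. -/
structure FGraph : Type 1 where
  V : Type
  [fin : Finite V]
  G : SimpleGraph V

attribute [instance] FGraph.fin

/-- A finite simple graph colored by `c` unary predicates. -/
structure CGraph (c : ℕ) : Type 1 where
  V : Type
  [fin : Finite V]
  G : SimpleGraph V
  color : Fin c → Set V

attribute [instance] CGraph.fin

/-! ### First-order formulas over `c`-colored graphs -/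

/-- First-order formulas in the language of graphs with `c` unary predicates,
with free variables among `Fin m`. -/
inductive Fml (c : ℕ) : ℕ → Type where
  | eq {m} : Fin m → Fin m → Fml c m
  | adj {m} : Fin m → Fin m → Fml c m
  | col {m} : Fin c → Fin m → Fml c m
  | not {m} : Fml c m → Fml c m
  | or {m} : Fml c m → Fml c m → Fml c m
  | ex {m} : Fml c (m + 1) → Fml c m

/-- Satisfaction of a first-order formula in a colored graph. -/
def Fml.Sat {c : ℕ} (A : CGraph c) : {m : ℕ} → Fml c m → (Fin m → A.V) → Prop
  | _, .eq i j, v => v i = v j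
  | _, .adj i j, v => A.G.Adj (v i) (v j)
  | _, .col i x, v => v x ∈ A.color i
  | _, .not φ, v => ¬ Fml.Sat A φ v
  | _, .or φ ψ, v => Fml.Sat A φ v ∨ Fml.Sat A ψ v
  | _, .ex φ, v => ∃ w : A.V, Fml.Sat A φ (Fin.snoc v w)

/-! ### Simple interpretations and transductions -/

/-- A simple interpretation of graphs in `c`-colored graphs: a pair of formulas
`(ν(x), η(x,y))` with `η` symmetric and anti-reflexive. -/
structure Interp (c : ℕ) where
  ν : Fml c 1
  η : Fml c 2
  symm : ∀ (A : CGraph c) (u v : A.V), Fml.Sat A η ![u, v] → Fml.Sat A η ![v, u]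
  irrefl : ∀ (A : CGraph c) (v : A.V), ¬ Fml.Sat A η ![v, v]

/-- The graph interpreted in a colored graph. -/
def Interp.result {c : ℕ} (I : Interp c) (A : CGraph c) :
    SimpleGraph {v : A.V // Fml.Sat A I.ν ![v]} where
  Adj u v := Fml.Sat A I.η ![u.1, v.1]
  symm := ⟨fun u v h => I.symm A u.1 v.1 h⟩
  loopless := ⟨fun v h => I.irrefl A v.1 h⟩

/-- The `k`-copy operation on graphs: the copies of a vertex form a clique, and copies
with the same index are adjacent iff the original vertices are. -/
def copyGraph {V : Type} (G : SimpleGraph V) (k : ℕ) : SimpleGraph (V × Fin k) where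
  Adj a b := (a.1 = b.1 ∧ a.2 ≠ b.2) ∨ (G.Adj a.1 b.1 ∧ a.2 = b.2)
  symm := by
    refine ⟨?_⟩
    rintro a b (⟨h1, h2⟩ | ⟨h1, h2⟩)
    · exact Or.inl ⟨h1.symm, h2.symm⟩
    · exact Or.inr ⟨h1.symm, h2.symm⟩
  loopless := by
    refine ⟨?_⟩
    rintro a (⟨_, h⟩ | ⟨h, _⟩)
    · exact h rfl
    · exact G.loopless.irrefl _ h

/-- The `k`-copy operation on finite graphs. -/
def FGraph.copy (G : FGraph) (k : ℕ) : FGraph where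
  V := G.V × Fin k
  G := copyGraph G.G k

/-- A transduction: a composition `I ∘ Γ_𝒰 ∘ C_k` of a copy operation, a coloring
operation and a simple interpretation. -/
structure Transduction where
  k : ℕ
  kpos : 0 < k
  c : ℕ
  I : Interp c

/-- The colored graph obtained from `C_k(G)` by a choice of coloring. -/
def Transduction.copyCGraph (T : Transduction) (G : FGraph)
    (color : Fin T.c → Set (G.V × Fin T.k)) : CGraph T.c where
  V := G.V × Fin T.k
  G := copyGraph G.G T.k
  color := color

/-- `H ∈ T(G)` (up to isomorphism). -/
def Transduction.mem (T : Transduction) (G H : FGraph) : Prop :=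
  ∃ color : Fin T.c → Set (G.V × Fin T.k),
    Nonempty (H.G ≃g T.I.result (T.copyCGraph G color))

/-- The image `T(𝒟)` of a class of graphs under a transduction. -/
def TImage (T : Transduction) (D : Set FGraph) : Set FGraph :=
  {H | ∃ G ∈ D, T.mem G H}

/-- `𝒞 ⊑_FO 𝒟` : `𝒞` is a first-order transduction of `𝒟`. -/
def SqFO (C D : Set FGraph) : Prop := ∃ T : Transduction, C ⊆ TImage T D

/-- `𝒞 ⊑°_FO 𝒟` : `𝒞` is a non-copying first-order transduction of `𝒟`. -/
def SqFOnc (C D : Set FGraph) : Prop := ∃ T : Transduction, T.k = 1 ∧ C ⊆ TImage T D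

/-- `𝒞 ≡_FO 𝒟`. -/
def EquivFO (C D : Set FGraph) : Prop := SqFO C D ∧ SqFO D C

/-- `T'` subsumes `T` : `T'(G) ⊇ T(G)` for every graph `G`. -/
def Subsumes (T' T : Transduction) : Prop := ∀ G H : FGraph, T.mem G H → T'.mem G H

/-! ### Perturbations -/

/-- The subset complementation `⊕M`: complement the adjacency between distinct
vertices that both belong to `M`. -/
def scompGraph {V : Type} (G : SimpleGraph V) (M : Set V) : SimpleGraph V where
  Adj u v := u ≠ v ∧ (G.Adj u v ↔ ¬(u ∈ M ∧ v ∈ M))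
  symm := by
    refine ⟨?_⟩
    rintro u v ⟨h1, h2⟩
    refine ⟨h1.symm, ?_, ?_⟩
    · intro h hm
      exact (h2.mp (G.adj_symm h)) ⟨hm.2, hm.1⟩
    · intro h
      exact G.adj_symm (h2.mpr fun hm => h ⟨hm.2, hm.1⟩)
  loopless := ⟨fun v h => h.1 rfl⟩

/-- Applying a finite sequence of subset complementations. -/
def perturbGraph {V : Type} : List (Set V) → SimpleGraph V → SimpleGraph V
  | [], G => G
  | M :: Ms, G => perturbGraph Ms (scompGraph G M)

/-- `H ∈ P(G)` for a perturbation `P` that is the composition of `p` subset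
complementations (up to isomorphism). -/
def PerturbMem (p : ℕ) (G H : FGraph) : Prop :=
  ∃ Z : Fin p → Set G.V, Nonempty (H.G ≃g perturbGraph (List.ofFn Z) G.G)

/-- The image `P(𝒟)` of a class under a perturbation with `p` marks. -/
def PerturbImage (p : ℕ) (D : Set FGraph) : Set FGraph :=
  {H | ∃ G ∈ D, PerturbMem p G H}

/-- `𝒞` is a perturbation of `𝒟`. -/
def IsPerturbationOfClass (C D : Set FGraph) : Prop := ∃ p, C ⊆ PerturbImage p D

/-! ### Locality -/

/-- The ball of radius `r` around a set `S` of vertices. -/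
def ballSet {V : Type} (G : SimpleGraph V) (r : ℕ) (S : Set V) : Set V :=
  {v | ∃ u ∈ S, G.Reachable u v ∧ G.dist u v ≤ r}

lemma mem_ballSet_self {V : Type} (G : SimpleGraph V) (r : ℕ) {S : Set V} {v : V}
    (hv : v ∈ S) : v ∈ ballSet G r S :=
  ⟨v, hv, Reachable.refl v, by rw [SimpleGraph.dist_self]; exact Nat.zero_le r⟩

/-- The colored subgraph induced on a set of vertices. -/
def CGraph.induce {c : ℕ} (A : CGraph c) (S : Set A.V) : CGraph c where
  V := ↥S
  G := A.G.induce S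
  color := fun i => {v | (v : A.V) ∈ A.color i}

/-- A formula is `r`-local if its truth only depends on the subgraph induced by the
ball of radius `r` around its free variables. -/
def IsLocalFml {c m : ℕ} (r : ℕ) (φ : Fml c m) : Prop :=
  ∀ (A : CGraph c) (v : Fin m → A.V),
    Fml.Sat A φ v ↔
      Fml.Sat (A.induce (ballSet A.G r (Set.range v))) φ
        (fun i => ⟨v i, mem_ballSet_self A.G r (Set.mem_range_self i)⟩)

/-- A formula is strongly `r`-local if it is `r`-local and, whenever it holds of a
tuple, the entries of the tuple are pairwise at distance at most `r`. -/
def IsStronglyLocalFml {c m : ℕ} (r : ℕ) (φ : Fml c m) : Prop :=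
  IsLocalFml r φ ∧
    ∀ (A : CGraph c) (v : Fin m → A.V), Fml.Sat A φ v →
      ∀ i j : Fin m, A.G.Reachable (v i) (v j) ∧ A.G.dist (v i) (v j) ≤ r

/-- An immersive transduction: non-copying, with strongly local formulas. -/
def Transduction.Immersive (T : Transduction) : Prop :=
  T.k = 1 ∧ ∃ r : ℕ, IsStronglyLocalFml r T.I.ν ∧ IsStronglyLocalFml r T.I.η

/-! ### Graph classes -/

/-- A set of graphs closed under isomorphism. -/
def IsoClosed (C : Set FGraph) : Prop :=
  ∀ G H : FGraph, Nonempty (G.G ≃g H.G) → G ∈ C → H ∈ C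

/-- `H` is (isomorphic to) an induced subgraph of `G`. -/
def IsInducedSubgraphOf (H G : FGraph) : Prop :=
  ∃ f : H.V → G.V, Function.Injective f ∧ ∀ u v, H.G.Adj u v ↔ G.G.Adj (f u) (f v)

/-- A hereditary class: closed under induced subgraphs. -/
def HereditaryClass (C : Set FGraph) : Prop :=
  ∀ G ∈ C, ∀ H : FGraph, IsInducedSubgraphOf H G → H ∈ C

/-- `H` is (isomorphic to) a subgraph of `G`. -/
def IsSubgraphOf (H G : FGraph) : Prop :=
  ∃ f : H.V → G.V, Function.Injective f ∧ ∀ u v, H.G.Adj u v → G.G.Adj (f u) (f v)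

/-- The monotone closure of a class: all subgraphs of its members. -/
def monotoneClosure (C : Set FGraph) : Set FGraph :=
  {H | ∃ G ∈ C, IsSubgraphOf H G}

/-- `G` contains `K_{t,t}` as a subgraph. -/
def HasKtt {V : Type} (G : SimpleGraph V) (t : ℕ) : Prop :=
  ∃ a b : Fin t → V, Function.Injective a ∧ Function.Injective b ∧
    (∀ i j, a i ≠ b j) ∧ ∀ i j, G.Adj (a i) (b j)

/-- A weakly sparse class: some `K_{t,t}` is a subgraph of no member. -/
def WeaklySparse (C : Set FGraph) : Prop := ∃ t : ℕ, ∀ G ∈ C, ¬ HasKtt G.G t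

/-- Disjoint union of two graphs. -/
def sumGraph {V W : Type} (G : SimpleGraph V) (H : SimpleGraph W) : SimpleGraph (V ⊕ W) where
  Adj a b := match a, b with
    | .inl u, .inl v => G.Adj u v
    | .inr u, .inr v => H.Adj u v
    | _, _ => False
  symm := by
    refine ⟨?_⟩
    rintro (u | u) (v | v) h
    · exact G.adj_symm h
    · exact h.elim
    · exact h.elim
    · exact H.adj_symm h
  loopless := by
    refine ⟨?_⟩
    rintro (v | v) h
    · exact G.loopless.irrefl _ h
    · exact H.loopless.irrefl _ h

/-- Disjoint union of finite graphs. -/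
def FGraph.disjUnion (G H : FGraph) : FGraph where
  V := G.V ⊕ H.V
  G := sumGraph G.G H.G

/-- An addable class: closed under disjoint unions. -/
def Addable (C : Set FGraph) : Prop :=
  ∀ G ∈ C, ∀ H ∈ C, FGraph.disjUnion G H ∈ C

/-- The degree of a vertex. -/
noncomputable def degCard (G : FGraph) (v : G.V) : ℕ := Nat.card {u : G.V // G.G.Adj v u}

/-- A class with bounded maximum degree. -/
def BddDegree (C : Set FGraph) : Prop := ∃ D : ℕ, ∀ G ∈ C, ∀ v : G.V, degCard G v ≤ D
/-! ### Further graph constructions and parameters -/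

/-- Auxiliary instance. -/
instance {α : Type} [Finite α] : Finite (Option α) :=
  Finite.of_equiv _ (Equiv.optionEquivSumPUnit.{0,0} α).symm

/-- Adding an apex vertex adjacent to all vertices. -/
def apexGraph {V : Type} (G : SimpleGraph V) : SimpleGraph (Option V) where
  Adj a b := match a, b with
    | none, none => False
    | none, some _ => True
    | some _, none => True
    | some u, some v => G.Adj u v
  symm := by
    refine ⟨?_⟩
    rintro (_ | u) (_ | v) h
    · exact h.elim
    · trivial
    · trivial
    · exact G.adj_symm h
  loopless := by
    refine ⟨?_⟩
    rintro (_ | v) h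
    · exact h.elim
    · exact G.loopless.irrefl _ h

/-- The class `𝒞 ∨ K₁` of graphs of `𝒞` with an added apex. -/
def JoinK1 (C : Set FGraph) : Set FGraph :=
  {H | ∃ G ∈ C, Nonempty (H.G ≃g apexGraph G.G)}

/-- The ball of radius `r` around a vertex, as a finite graph. -/
def ballFGraph (G : FGraph) (r : ℕ) (v : G.V) : FGraph where
  V := ↥(ballSet G.G r {v})
  G := G.G.induce (ballSet G.G r {v})

/-- The class `𝓛_r(ℱ)` of all balls of radius `r` of graphs of `ℱ`. -/
def LocClass (r : ℕ) (F : Set FGraph) : Set FGraph :=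
  {H | ∃ G ∈ F, ∃ v : G.V, Nonempty (H.G ≃g (ballFGraph G r v).G)}

/-- Adding a pendant vertex adjacent only to `v`. -/
def pendantGraph {V : Type} (G : SimpleGraph V) (v : V) : SimpleGraph (Option V) where
  Adj a b := match a, b with
    | none, none => False
    | none, some w => w = v
    | some u, none => u = v
    | some u, some w => G.Adj u w
  symm := by
    refine ⟨?_⟩
    rintro (_ | u) (_ | w) h
    · exact h.elim
    · exact h
    · exact h
    · exact G.adj_symm h
  loopless := by
    refine ⟨?_⟩
    rintro (_ | w) h
    · exact h.elim
    · exact G.loopless.irrefl _ h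

/-- The finite graph obtained by adding a pendant vertex at `v`. -/
def FGraph.addPendant (G : FGraph) (v : G.V) : FGraph where
  V := Option G.V
  G := pendantGraph G.G v

/-- `G` is obtained from `H` by adding at most `h` vertices, joined arbitrarily. -/
def NearlyOf (h : ℕ) (G H : FGraph) : Prop :=
  ∃ f : H.V → G.V, Function.Injective f ∧
    (∀ u v, H.G.Adj u v ↔ G.G.Adj (f u) (f v)) ∧
    Nat.card {v : G.V // v ∉ Set.range f} ≤ h

/-- The class `𝒞` is nearly `𝒟`. -/
def Nearly (C D : Set FGraph) : Prop :=
  ∃ h : ℕ, ∀ G ∈ C, ∃ H ∈ D, NearlyOf h G H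

/-- The class `ℰ` of all edgeless graphs. -/
def EdgelessClass : Set FGraph := {G | ∀ u v : G.V, ¬ G.G.Adj u v}

/-- All members of the class have connected components of bounded size. -/
def BddComponents (D : Set FGraph) : Prop :=
  ∃ n : ℕ, ∀ G ∈ D, ∀ v : G.V, Nat.card {u : G.V // G.G.Reachable v u} ≤ n

/-- The class of all cubic (3-regular) graphs. -/
def CubicClass : Set FGraph := {G | ∀ v : G.V, degCard G v = 3}

/-- The class `𝒫` of all paths. -/
def PathClass : Set FGraph :=
  {G | ∃ n : ℕ, Nonempty (G.G ≃g SimpleGraph.pathGraph n)}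

/-- The `ℓ`-th power of a graph: two vertices are adjacent iff their distance
is between `1` and `ℓ`. -/
def powGraph {V : Type} (G : SimpleGraph V) (ℓ : ℕ) : SimpleGraph V where
  Adj u v := u ≠ v ∧ G.Reachable u v ∧ G.dist u v ≤ ℓ
  symm := by
    refine ⟨?_⟩
    rintro u v ⟨h1, h2, h3⟩
    exact ⟨h1.symm, h2.symm, by rwa [SimpleGraph.dist_comm]⟩
  loopless := ⟨fun v h => h.1 rfl⟩

/-- The bandwidth of `G` is at most `ℓ` : `G` is a subgraph of the `ℓ`-th power
of a path. -/
def BandwidthLE (G : FGraph) (ℓ : ℕ) : Prop :=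
  ∃ n : ℕ, ∃ f : G.V → Fin n, Function.Injective f ∧
    ∀ u v, G.G.Adj u v → (powGraph (SimpleGraph.pathGraph n) ℓ).Adj (f u) (f v)

/-- A class with bounded bandwidth. -/
def BddBandwidth (D : Set FGraph) : Prop := ∃ ℓ : ℕ, ∀ G ∈ D, BandwidthLE G ℓ

/-- The class of all cubic trees: trees all of whose vertices have degree 3 or 1. -/
def CubicTreeClass : Set FGraph :=
  {G | G.G.IsTree ∧ ∀ v : G.V, degCard G v = 3 ∨ degCard G v = 1}

/-- `H` contains a clique on `s` vertices. -/
def HasCliqueN {V : Type} (H : SimpleGraph V) (s : ℕ) : Prop :=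
  ∃ f : Fin s → V, Function.Injective f ∧ ∀ i j, i ≠ j → H.Adj (f i) (f j)

/-- A chordal graph: no induced cycle of length at least 4. -/
def IsChordal {V : Type} (H : SimpleGraph V) : Prop :=
  ∀ n : ℕ, 4 ≤ n → ¬ ∃ f : Fin n → V, Function.Injective f ∧
    ∀ i j, (SimpleGraph.cycleGraph n).Adj i j ↔ H.Adj (f i) (f j)

/-- `tw(G) ≤ n` : `G` is a subgraph of a chordal graph with clique number at most `n+1`. -/
def TreewidthLE (G : FGraph) (n : ℕ) : Prop :=
  ∃ H : SimpleGraph G.V, IsChordal H ∧ G.G ≤ H ∧ ¬ HasCliqueN H (n + 2)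

/-- A class with bounded treewidth. -/
def BddTreewidth (D : Set FGraph) : Prop := ∃ n : ℕ, ∀ G ∈ D, TreewidthLE G n

/-- An interval graph: the intersection graph of a family of real intervals. -/
def IsIntervalGraph {V : Type} (H : SimpleGraph V) : Prop :=
  ∃ l r : V → ℝ, (∀ v, l v ≤ r v) ∧
    ∀ u v, u ≠ v → (H.Adj u v ↔ (l u ≤ r v ∧ l v ≤ r u))

/-- `pw(G) ≤ n` : `G` is a subgraph of an interval graph with clique number at
most `n+1`. -/
def PathwidthLE (G : FGraph) (n : ℕ) : Prop :=
  ∃ H : SimpleGraph G.V, IsIntervalGraph H ∧ G.G ≤ H ∧ ¬ HasCliqueN H (n + 2)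

/-- The class `𝒫𝒲_n` of all graphs of pathwidth at most `n`. -/
def PWClass (n : ℕ) : Set FGraph := {G | PathwidthLE G n}

/-- `G` is a forest of depth at most `n` : it is acyclic and roots may be chosen,
one in each connected component, such that every vertex is at distance at most
`n - 1` from the root of its component. -/
def ForestDepthLE (n : ℕ) (G : FGraph) : Prop :=
  G.G.IsAcyclic ∧ ∃ ρ : G.V → G.V,
    (∀ v, G.G.Reachable (ρ v) v ∧ G.G.dist (ρ v) v ≤ n - 1) ∧
    ∀ u v, G.G.Reachable u v → ρ u = ρ v

/-- The class `𝒯_n` of forests of depth at most `n`. -/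
def TreeDepthClass (n : ℕ) : Set FGraph := {G | ForestDepthLE n G}

/-- A star forest: an acyclic graph with no path on four distinct vertices. -/
def IsStarForest (G : FGraph) : Prop :=
  G.G.IsAcyclic ∧ ∀ a b c d : G.V, G.G.Adj a b → G.G.Adj b c → G.G.Adj c d →
    a = c ∨ b = d ∨ a = d

/-- The class `𝒯₂` of all star forests. -/
def StarForestClass : Set FGraph := {G | IsStarForest G}

/-- `H` is a depth-`r` shallow minor of `G` : it is obtained by contracting
pairwise disjoint connected subgraphs of radius at most `r` and deleting
vertices and edges. -/
def IsShallowMinor (r : ℕ) (H G : FGraph) : Prop :=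
  ∃ φ : H.V → Set G.V,
    (∀ v, (φ v).Nonempty) ∧
    (∀ u v, u ≠ v → Disjoint (φ u) (φ v)) ∧
    (∀ v : H.V, ∃ c : ↥(φ v), ∀ u : ↥(φ v),
      (G.G.induce (φ v)).Reachable c u ∧ (G.G.induce (φ v)).dist c u ≤ r) ∧
    (∀ u v : H.V, H.G.Adj u v → ∃ a ∈ φ u, ∃ b ∈ φ v, G.G.Adj a b)

/-- The average degree of `H` is at most `d`. -/
def AvgDegLE (H : FGraph) (d : ℕ) : Prop :=
  2 * Nat.card H.G.edgeSet ≤ d * Nat.card H.V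

/-- A class of bounded expansion: for some `f : ℕ → ℕ`, every depth-`r` shallow
minor of a member has average degree at most `f r`. -/
def BoundedExpansion (C : Set FGraph) : Prop :=
  ∃ f : ℕ → ℕ, ∀ r : ℕ, ∀ G ∈ C, ∀ H : FGraph, IsShallowMinor r H G → AvgDegLE H (f r)

/-- A proper coloring `f` of `G` with `n` colors is a star coloring if no path on
four vertices receives only two colors. -/
def IsStarColoring {V : Type} (G : SimpleGraph V) (n : ℕ) (f : V → Fin n) : Prop :=
  (∀ u v, G.Adj u v → f u ≠ f v) ∧
  ∀ a b c d, G.Adj a b → G.Adj b c → G.Adj c d → a ≠ c → b ≠ d → a ≠ d →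
    ¬ (f a = f c ∧ f b = f d)

/-- A class with bounded star chromatic number. -/
def BddStarChrom (C : Set FGraph) : Prop :=
  ∃ n : ℕ, ∀ G ∈ C, ∃ f : G.V → Fin n, IsStarColoring G.G n f

/-!
The edge formula of `T` is replaced by a guarded formula, all of whose quantifiers range over a
ball of bounded radius around a free variable; such a formula is local by construction. The
translation may use new unary predicates, chosen for each graph, which become colors of `T'`; the
domain formula of `T` becomes one more color.

The translation is by induction on the formula, and the only real step is an unguarded
`∃ w, θ(x̄, w)` with `θ` guarded of radius `r`. A witness within `s = 2r + 1` of some `xⱼ` is found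
by a guarded quantifier. For a witness farther away, `θ(x̄, w)` is equivalent to a disjunction of
formulas `α(x̄) ∧ β(w)`, because no guarded subformula reaches across distance `s`. Whether `β` has
a witness far from `x̄` is decided by a maximal `2s`-scattered set `S` of `β`-points: if
`|S| > m`, then by pigeonhole some point of `S` is far from any `m` vertices; otherwise the points
of `S`, marked by colors, are centers covering all `β`-points within `2s`, and a far witness exists
iff some center is `3s`-far from `x̄` or some far witness lies within `5s` of `x̄`.
-/

lemma List.exists_fin_getElem?_iff {α : Type*} {l : List α} {m : ℕ} (hl : l.length ≤ m)
    {P : α → Prop} : (∃ i : Fin m, ∃ c, l[(i : ℕ)]? = some c ∧ P c) ↔ ∃ c ∈ l, P c := by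
  constructor
  · rintro ⟨i, c, hc, hP⟩
    exact ⟨c, List.mem_of_getElem? hc, hP⟩
  · rintro ⟨c, hc, hP⟩
    obtain ⟨n, hn⟩ := List.mem_iff_getElem?.mp hc
    exact ⟨⟨n, (List.getElem?_eq_some_iff.mp hn).1.trans_le hl⟩, c, hn, hP⟩

namespace SimpleGraph

variable {V V' : Type*} {G : SimpleGraph V} {u v : V}

lemma reachable_of_edist_le {R : ℕ} (h : G.edist u v ≤ R) : G.Reachable u v :=
  reachable_of_edist_ne_top (ne_top_of_le_ne_top (ENat.natCast_ne_top R) h)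

lemma edist_le_coe_iff {R : ℕ} : G.edist u v ≤ R ↔ G.Reachable u v ∧ G.dist u v ≤ R := by
  constructor
  · intro h
    have hr := reachable_of_edist_le h
    rw [← hr.coe_dist_eq_edist] at h
    exact ⟨hr, mod_cast h⟩
  · rintro ⟨hr, hd⟩
    rw [← hr.coe_dist_eq_edist]
    exact mod_cast hd

lemma edist_le_succ_iff {R : ℕ} :
    G.edist u v ≤ R + 1 ↔ ∃ z, G.edist u z ≤ 1 ∧ G.edist z v ≤ R := by
  constructor
  · intro h
    by_cases huv : u = v
    · exact ⟨u, by simp, by simp [huv]⟩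
    obtain ⟨p, hp⟩ := (reachable_of_edist_le h).exists_walk_length_eq_edist
    cases p with
    | nil => exact absurd rfl huv
    | cons hadj q =>
      refine ⟨_, (edist_le hadj.toWalk).trans (by simp), (edist_le q).trans ?_⟩
      rw [← hp, Walk.length_cons] at h
      have : q.length + 1 ≤ R + 1 := by exact_mod_cast h
      exact_mod_cast Nat.le_of_succ_le_succ this
  · rintro ⟨z, huz, hzv⟩
    calc G.edist u v ≤ G.edist u z + G.edist z v := G.edist_triangle
      _ ≤ 1 + R := add_le_add huz hzv
      _ = R + 1 := add_comm _ _

lemma Hom.edist_le {G' : SimpleGraph V'} (f : G →g G') (u v : V) :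
    G'.edist (f u) (f v) ≤ G.edist u v := by
  by_cases hr : G.Reachable u v
  · obtain ⟨p, hp⟩ := hr.exists_walk_length_eq_edist
    rw [← hp, ← p.length_map f]
    exact SimpleGraph.edist_le _
  · rw [edist_eq_top_of_not_reachable hr]
    exact le_top

lemma edist_induce_le {W : Set V} {R : ℕ} (hu : u ∈ W) (hball : ∀ x, G.edist u x ≤ R → x ∈ W)
    (h : G.edist u v ≤ R) : (G.induce W).edist ⟨u, hu⟩ ⟨v, hball v h⟩ ≤ R := by
  classical
  obtain ⟨p, hp⟩ := (reachable_of_edist_le h).exists_walk_length_eq_edist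
  have hsupp : ∀ x ∈ p.support, x ∈ W := fun x hx =>
    hball x <| (edist_le (p.takeUntil x hx)).trans <|
      (Nat.cast_le.mpr (p.length_takeUntil_le_length hx)).trans (hp ▸ h)
  calc (G.induce W).edist ⟨u, hu⟩ ⟨v, hball v h⟩ ≤ (p.induce W hsupp).length := edist_le _
    _ = p.length := by
      have := congrArg Walk.length (p.map_induce hsupp)
      rw [Walk.length_map] at this
      exact_mod_cast this
    _ ≤ R := hp ▸ h

variable (G)

lemma exists_scattered_dense [Finite V] (B : Set V) (d : ℕ) :
    ∃ S : Finset V, ↑S ⊆ B ∧ (S : Set V).Pairwise (fun x y => d < G.edist x y) ∧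
      ∀ w ∈ B, ∃ c ∈ S, G.edist c w ≤ d := by
  classical
  obtain ⟨S, ⟨hSB, hS⟩, hmax⟩ := (Set.toFinite {S : Finset V | ↑S ⊆ B ∧
    (S : Set V).Pairwise (fun x y => d < G.edist x y)}).exists_maximal ⟨∅, by simp⟩
  refine ⟨S, hSB, hS, fun w hw => ?_⟩
  by_contra! hfar
  have hins : ↑(insert w S) ⊆ B ∧
      (↑(insert w S) : Set V).Pairwise (fun x y => d < G.edist x y) := by
    refine ⟨by simpa [Set.insert_subset_iff] using ⟨hw, hSB⟩, ?_⟩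
    rw [Finset.coe_insert, Set.pairwise_insert]
    exact ⟨hS, fun c hc _ => ⟨G.edist_comm ▸ hfar c hc, hfar c hc⟩⟩
  have hwS : w ∈ S := hmax hins (Finset.subset_insert w S) (Finset.mem_insert_self w S)
  simpa using hfar w hwS

lemma exists_far_of_scattered {S : Finset V} {s m : ℕ}
    (hS : (S : Set V).Pairwise fun x y => 2 * s < G.edist x y) (hm : m < S.card)
    (v : Fin m → V) : ∃ c ∈ S, ∀ j, s < G.edist (v j) c := by
  by_contra! hnear
  choose f hf using hnear
  obtain ⟨x, y, hxy, hfxy⟩ := Fintype.exists_ne_map_eq_of_card_lt (fun c : S => f c c.2)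
    (by simpa using hm)
  refine (hS x.2 y.2 (Subtype.coe_ne_coe.mpr hxy)).not_ge ?_
  calc G.edist x y ≤ G.edist x (v (f x x.2)) + G.edist (v (f x x.2)) y := G.edist_triangle
    _ ≤ s + s := add_le_add (G.edist_comm ▸ hf x x.2) (hfxy ▸ hf y y.2)
    _ = 2 * s := (two_mul _).symm

lemma forall_exists_far_or_exists_centers [Finite V] (B : Set V) (s m : ℕ) :
    (∀ v : Fin m → V, ∃ w ∈ B, ∀ j, s < G.edist (v j) w) ∨
      ∃ S : Finset V, S.card ≤ m ∧ ↑S ⊆ B ∧ ∀ w ∈ B, ∃ c ∈ S, G.edist c w ≤ 2 * s := by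
  obtain ⟨S, hSB, hS, hcov⟩ := G.exists_scattered_dense B (2 * s)
  by_cases hm : m < S.card
  · left
    intro v
    obtain ⟨c, hc, hfar⟩ := G.exists_far_of_scattered (by exact_mod_cast hS) hm v
    exact ⟨c, hSB hc, hfar⟩
  · exact Or.inr ⟨S, by omega, hSB, by exact_mod_cast hcov⟩

lemma exists_far_iff_of_centers {B S : Set V} {s m : ℕ} (hSB : S ⊆ B)
    (hcov : ∀ w ∈ B, ∃ c ∈ S, G.edist c w ≤ 2 * s) (v : Fin m → V) :
    (∃ w ∈ B, ∀ j, s < G.edist (v j) w) ↔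
      (∃ c ∈ S, ∀ j, 3 * s < G.edist (v j) c) ∨
        ∃ j w, G.edist (v j) w ≤ 5 * s ∧ w ∈ B ∧ ∀ j', s < G.edist (v j') w := by
  constructor
  · rintro ⟨w, hw, hfar⟩
    obtain ⟨c, hc, hcw⟩ := hcov w hw
    by_cases hcfar : ∀ j, 3 * s < G.edist (v j) c
    · exact Or.inl ⟨c, hc, hcfar⟩
    push Not at hcfar
    obtain ⟨j, hj⟩ := hcfar
    refine Or.inr ⟨j, w, ?_, hw, hfar⟩
    calc G.edist (v j) w ≤ G.edist (v j) c + G.edist c w := G.edist_triangle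
      _ ≤ 3 * s + 2 * s := add_le_add hj hcw
      _ = 5 * s := by ring
  · rintro (⟨c, hc, hfar⟩ | ⟨j, w, -, hw, hfar⟩)
    · refine ⟨c, hSB hc, fun j => lt_of_le_of_lt ?_ (hfar j)⟩
      exact_mod_cast (by omega : s ≤ 3 * s)
    · exact ⟨w, hw, hfar⟩

end SimpleGraph

lemma mem_ballSet_iff {V : Type} {G : SimpleGraph V} {r : ℕ} {S : Set V} {x : V} :
    x ∈ ballSet G r S ↔ ∃ u ∈ S, G.edist u x ≤ r :=
  exists_congr fun _ => and_congr_right fun _ => SimpleGraph.edist_le_coe_iff.symm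

lemma ballSet_mono {V : Type} {G : SimpleGraph V} {r r' : ℕ} (h : r ≤ r') (S : Set V) :
    ballSet G r S ⊆ ballSet G r' S := fun _ ⟨u, hu, hr, hd⟩ => ⟨u, hu, hr, hd.trans h⟩

/-- First-order formulas whose quantifiers are guarded: `exNear i R θ` only quantifies over the
`R`-ball around the `i`-th free variable. -/
inductive GFml (κ : Type) : ℕ → Type where
  | bot {m} : GFml κ m
  | eq {m} : Fin m → Fin m → GFml κ m
  | adj {m} : Fin m → Fin m → GFml κ m
  | col {m} : κ → Fin m → GFml κ m
  | not {m} : GFml κ m → GFml κ m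
  | or {m} : GFml κ m → GFml κ m → GFml κ m
  | exNear {m} : Fin m → ℕ → GFml κ (m + 1) → GFml κ m

namespace GFml

variable {κ κ' : Type} {V : Type}

def Sat (G : SimpleGraph V) (C : κ → Set V) : {m : ℕ} → GFml κ m → (Fin m → V) → Prop
  | _, bot, _ => False
  | _, eq i j, v => v i = v j
  | _, adj i j, v => G.Adj (v i) (v j)
  | _, col k i, v => v i ∈ C k
  | _, not θ, v => ¬ Sat G C θ v
  | _, or θ₁ θ₂, v => Sat G C θ₁ v ∨ Sat G C θ₂ v
  | _, exNear i R θ, v => ∃ w, G.edist (v i) w ≤ R ∧ Sat G C θ (Fin.snoc v w)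

def radius : {m : ℕ} → GFml κ m → ℕ
  | _, bot | _, eq _ _ | _, adj _ _ | _, col _ _ => 0
  | _, not θ => radius θ
  | _, or θ₁ θ₂ => max (radius θ₁) (radius θ₂)
  | _, exNear _ R θ => R + radius θ

def rename : {m m' : ℕ} → (Fin m → Fin m') → GFml κ m → GFml κ m'
  | _, _, _, bot => bot
  | _, _, ρ, eq i j => eq (ρ i) (ρ j)
  | _, _, ρ, adj i j => adj (ρ i) (ρ j)
  | _, _, ρ, col k i => col k (ρ i)
  | _, _, ρ, not θ => not (rename ρ θ)
  | _, _, ρ, or θ₁ θ₂ => or (rename ρ θ₁) (rename ρ θ₂)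
  | _, m', ρ, exNear i R θ =>
    exNear (ρ i) R (rename (Fin.snoc (Fin.castSucc ∘ ρ) (Fin.last m')) θ)

def recolor (g : κ → κ') : {m : ℕ} → GFml κ m → GFml κ' m
  | _, bot => bot
  | _, eq i j => eq i j
  | _, adj i j => adj i j
  | _, col k i => col (g k) i
  | _, not θ => not (recolor g θ)
  | _, or θ₁ θ₂ => or (recolor g θ₁) (recolor g θ₂)
  | _, exNear i R θ => exNear i R (recolor g θ)

def top {m : ℕ} : GFml κ m := not bot

def and {m : ℕ} (θ₁ θ₂ : GFml κ m) : GFml κ m := not (or (not θ₁) (not θ₂))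

def iSup {m : ℕ} : {n : ℕ} → (Fin n → GFml κ m) → GFml κ m
  | 0, _ => bot
  | _ + 1, θ => or (θ 0) (iSup (Fin.tail θ))

def iInf {m n : ℕ} (θ : Fin n → GFml κ m) : GFml κ m := not (iSup fun k => not (θ k))

def near (R : ℕ) {m : ℕ} (a b : Fin m) : GFml κ m := exNear a R (eq (Fin.last m) b.castSucc)

section Semantics

variable (G : SimpleGraph V) (C : κ → Set V) {m : ℕ}

@[simp] lemma sat_bot (v : Fin m → V) : (bot : GFml κ m).Sat G C v ↔ False := Iff.rfl

@[simp] lemma sat_not (θ : GFml κ m) (v : Fin m → V) : θ.not.Sat G C v ↔ ¬ θ.Sat G C v :=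
  Iff.rfl

@[simp] lemma sat_or (θ₁ θ₂ : GFml κ m) (v : Fin m → V) :
    (θ₁.or θ₂).Sat G C v ↔ θ₁.Sat G C v ∨ θ₂.Sat G C v := Iff.rfl

@[simp] lemma sat_top (v : Fin m → V) : (top : GFml κ m).Sat G C v := not_false

@[simp] lemma sat_and (θ₁ θ₂ : GFml κ m) (v : Fin m → V) :
    (θ₁.and θ₂).Sat G C v ↔ θ₁.Sat G C v ∧ θ₂.Sat G C v := by
  simp [and, Sat]

@[simp] lemma sat_iSup {n : ℕ} (θ : Fin n → GFml κ m) (v : Fin m → V) :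
    (iSup θ).Sat G C v ↔ ∃ k, (θ k).Sat G C v := by
  induction n with
  | zero => simp [iSup]
  | succ n ih => simp [iSup, ih, Fin.exists_fin_succ, Fin.tail]

@[simp] lemma sat_iInf {n : ℕ} (θ : Fin n → GFml κ m) (v : Fin m → V) :
    (iInf θ).Sat G C v ↔ ∀ k, (θ k).Sat G C v := by
  simp [iInf, Sat]

@[simp] lemma sat_near (R : ℕ) (a b : Fin m) (v : Fin m → V) :
    (near R a b : GFml κ m).Sat G C v ↔ G.edist (v a) (v b) ≤ R := by
  simp [near, Sat]

lemma sat_rename {m m' : ℕ} (θ : GFml κ m) (ρ : Fin m → Fin m') (v : Fin m' → V) :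
    (θ.rename ρ).Sat G C v ↔ θ.Sat G C (v ∘ ρ) := by
  induction θ generalizing m' with
  | exNear i R θ ih =>
    simp only [rename, Sat, ih]
    refine exists_congr fun w => and_congr_right fun _ => ?_
    rw [Fin.comp_snoc, ← Function.comp_assoc, Fin.snoc_comp_castSucc, Fin.snoc_last]
  | _ => simp_all [rename, Sat]

lemma sat_recolor (g : κ' → κ) {m : ℕ} (θ : GFml κ' m) (v : Fin m → V) :
    (θ.recolor g).Sat G C v ↔ θ.Sat G (C ∘ g) v := by
  induction θ with
  | _ => simp_all [recolor, Sat]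

theorem sat_induce {W : Set V} (θ : GFml κ m) (u : Fin m → W)
    (hW : ballSet G θ.radius (Set.range (Subtype.val ∘ u)) ⊆ W) :
    θ.Sat (G.induce W) (fun k => Subtype.val ⁻¹' C k) u ↔ θ.Sat G C (Subtype.val ∘ u) := by
  induction θ with
  | bot | adj | col => rfl
  | eq i j => exact Subtype.ext_iff
  | not θ ih => exact not_congr (ih u hW)
  | or θ₁ θ₂ ih₁ ih₂ =>
    exact or_congr (ih₁ u ((ballSet_mono (le_max_left _ _) _).trans hW))
      (ih₂ u ((ballSet_mono (le_max_right _ _) _).trans hW))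
  | @exNear m i R θ ih =>
    have hR : ∀ x, G.edist (u i) x ≤ R → x ∈ W := fun x hx =>
      hW (mem_ballSet_iff.mpr ⟨u i, ⟨i, rfl⟩, hx.trans (by simp [radius])⟩)
    have hsnoc : ∀ w : W, G.edist (u i) w ≤ R →
        ballSet G θ.radius (Set.range (Subtype.val ∘ Fin.snoc u w)) ⊆ W := by
      intro w hw x hx
      obtain ⟨_, ⟨j, rfl⟩, hjx⟩ := mem_ballSet_iff.mp hx
      apply hW
      rw [mem_ballSet_iff]
      induction j using Fin.lastCases with
      | last =>
        simp only [Function.comp_apply, Fin.snoc_last] at hjx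
        refine ⟨u i, ⟨i, rfl⟩, ?_⟩
        calc G.edist (u i) x ≤ G.edist (u i) w + G.edist w x := G.edist_triangle
          _ ≤ R + θ.radius := add_le_add hw hjx
          _ = ((R + θ.radius : ℕ) : ℕ∞) := by push_cast; rfl
      | cast j =>
        simp only [Function.comp_apply, Fin.snoc_castSucc] at hjx
        exact ⟨u j, ⟨j, rfl⟩, hjx.trans (by simp [radius])⟩
    simp only [Sat]
    constructor
    · rintro ⟨w, hw, hθ⟩
      have hw' : G.edist (u i) w ≤ R := ((Embedding.induce W).toHom.edist_le _ _).trans hw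
      refine ⟨w, hw', ?_⟩
      simpa [Fin.comp_snoc] using (ih (Fin.snoc u w) (hsnoc w hw')).mp hθ
    · rintro ⟨w, hw, hθ⟩
      refine ⟨⟨w, hR w hw⟩, SimpleGraph.edist_induce_le (u i).2 hR hw, ?_⟩
      refine (ih _ (hsnoc ⟨w, hR w hw⟩ hw)).mpr ?_
      simpa [Fin.comp_snoc] using hθ

end Semantics

end GFml

namespace GFml

variable {κ : Type} {m : ℕ}

def DependsOn (θ : GFml κ m) (S : Set (Fin m)) : Prop :=
  ∀ (V : Type) (G : SimpleGraph V) (C : κ → Set V) (v v' : Fin m → V),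
    (∀ i ∈ S, v i = v' i) → (θ.Sat G C v ↔ θ.Sat G C v')

namespace DependsOn

variable {θ θ' : GFml κ m} {S S' : Set (Fin m)}

lemma mono (h : θ.DependsOn S) (hS : S ⊆ S') : θ.DependsOn S' :=
  fun V G C v v' hv => h V G C v v' fun i hi => hv i (hS hi)

lemma top : (top : GFml κ m).DependsOn S := fun _ _ _ _ _ _ => by simp

lemma not (h : θ.DependsOn S) : θ.not.DependsOn S :=
  fun V G C v v' hv => not_congr (h V G C v v' hv)

lemma and (h : θ.DependsOn S) (h' : θ'.DependsOn S) : (θ.and θ').DependsOn S :=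
  fun V G C v v' hv => by simp only [sat_and, h V G C v v' hv, h' V G C v v' hv]

lemma rename {m' : ℕ} {θ : GFml κ m'} {ρ : Fin m' → Fin m} (h : θ.DependsOn (ρ ⁻¹' S)) :
    (θ.rename ρ).DependsOn S :=
  fun V G C v v' hv => by
    rw [sat_rename, sat_rename]
    exact h V G C _ _ fun i hi => hv (ρ i) hi

lemma exNear {θ : GFml κ (m + 1)} {T : Set (Fin (m + 1))} (h : θ.DependsOn T) {i : Fin m}
    (hi : i ∈ S) (hT : ∀ j, j.castSucc ∈ T → j ∈ S) (R : ℕ) : (exNear i R θ).DependsOn S := by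
  intro V G C v v' hv
  simp only [Sat, hv i hi]
  refine exists_congr fun w => and_congr_right fun _ => h V G C _ _ fun a ha => ?_
  induction a using Fin.lastCases with
  | last => simp
  | cast j => simpa using hv j (hT j ha)

end DependsOn

section DNF

variable {V : Type} (G : SimpleGraph V) (C : κ → Set V)

def SatDNF (L : List (GFml κ m × GFml κ m)) (v : Fin m → V) : Prop :=
  ∃ p ∈ L, p.1.Sat G C v ∧ p.2.Sat G C v

def negDNF : List (GFml κ m × GFml κ m) → List (GFml κ m × GFml κ m)
  | [] => [(top, top)]
  | p :: L => (negDNF L).map (fun q => (p.1.not.and q.1, q.2)) ++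
      (negDNF L).map (fun q => (q.1, p.2.not.and q.2))

variable {G C}

@[simp] lemma satDNF_nil (v : Fin m → V) : ¬ SatDNF G C [] v := by simp [SatDNF]

@[simp] lemma satDNF_cons (p : GFml κ m × GFml κ m) (L : List (GFml κ m × GFml κ m))
    (v : Fin m → V) :
    SatDNF G C (p :: L) v ↔ (p.1.Sat G C v ∧ p.2.Sat G C v) ∨ SatDNF G C L v := by
  simp [SatDNF]

@[simp] lemma satDNF_append (L L' : List (GFml κ m × GFml κ m)) (v : Fin m → V) :
    SatDNF G C (L ++ L') v ↔ SatDNF G C L v ∨ SatDNF G C L' v := by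
  simp only [SatDNF, List.mem_append, or_and_right, exists_or]

lemma satDNF_map_swap (L : List (GFml κ m × GFml κ m)) (v : Fin m → V) :
    SatDNF G C (L.map Prod.swap) v ↔ SatDNF G C L v := by
  constructor
  · rintro ⟨_, hq, h₁, h₂⟩
    obtain ⟨p, hp, rfl⟩ := List.mem_map.mp hq
    exact ⟨p, hp, h₂, h₁⟩
  · rintro ⟨p, hp, h₁, h₂⟩
    exact ⟨p.swap, List.mem_map_of_mem hp, h₂, h₁⟩

lemma satDNF_map_and_left (α : GFml κ m) (L : List (GFml κ m × GFml κ m)) (v : Fin m → V) :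
    SatDNF G C (L.map fun q => (α.and q.1, q.2)) v ↔ α.Sat G C v ∧ SatDNF G C L v := by
  simp only [SatDNF, List.mem_map, Prod.exists]
  grind [sat_and]

lemma satDNF_map_and_right (β : GFml κ m) (L : List (GFml κ m × GFml κ m)) (v : Fin m → V) :
    SatDNF G C (L.map fun q => (q.1, β.and q.2)) v ↔ β.Sat G C v ∧ SatDNF G C L v := by
  simp only [SatDNF, List.mem_map, Prod.exists]
  grind [sat_and]

lemma satDNF_negDNF (L : List (GFml κ m × GFml κ m)) (v : Fin m → V) :
    SatDNF G C (negDNF L) v ↔ ¬ SatDNF G C L v := by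
  induction L with
  | nil => simp [SatDNF, negDNF]
  | cons p L ih =>
    simp only [negDNF, satDNF_append, satDNF_map_and_left, satDNF_map_and_right, satDNF_cons,
      sat_not, ih]
    tauto

end DNF

lemma dependsOn_negDNF {S T : Set (Fin m)} (L : List (GFml κ m × GFml κ m))
    (hL : ∀ p ∈ L, p.1.DependsOn S ∧ p.2.DependsOn T) :
    ∀ q ∈ negDNF L, q.1.DependsOn S ∧ q.2.DependsOn T := by
  induction L with
  | nil => simp [negDNF, DependsOn.top]
  | cons p L ih =>
    simp only [List.mem_cons, forall_eq_or_imp] at hL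
    simp only [negDNF, List.mem_append, List.mem_map]
    rintro _ (⟨q, hq, rfl⟩ | ⟨q, hq, rfl⟩)
    · exact ⟨hL.1.1.not.and (ih hL.2 q hq).1, (ih hL.2 q hq).2⟩
    · exact ⟨(ih hL.2 q hq).1, hL.1.2.not.and (ih hL.2 q hq).2⟩

def Separated {V : Type} (G : SimpleGraph V) (d : ℕ) (f : Fin m → Bool) (v : Fin m → V) : Prop :=
  ∀ i j, f i = false → f j = true → d < G.edist (v i) (v j)

lemma Separated.snoc {V : Type} {G : SimpleGraph V} {d R : ℕ} {f : Fin m → Bool} {v : Fin m → V}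
    (hv : Separated G (d + R) f v) {i : Fin m} (hi : f i = false) {w : V}
    (hw : G.edist (v i) w ≤ R) : Separated G d (Fin.snoc f false) (Fin.snoc v w) := by
  intro a b ha hb
  induction b using Fin.lastCases with
  | last => simp at hb
  | cast b =>
    simp only [Fin.snoc_castSucc] at hb ⊢
    induction a using Fin.lastCases with
    | last =>
      simp only [Fin.snoc_last]
      by_contra! hwb
      refine (hv i b hi hb).not_ge ?_
      calc G.edist (v i) (v b) ≤ G.edist (v i) w + G.edist w (v b) := G.edist_triangle
        _ ≤ R + d := add_le_add hw hwb
        _ = ((d + R : ℕ) : ℕ∞) := by push_cast; ring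
    | cast a =>
      simp only [Fin.snoc_castSucc] at ha ⊢
      exact lt_of_le_of_lt (by simp) (hv a b ha hb)

def SplitsAs (d : ℕ) (θ : GFml κ m) (f : Fin m → Bool) (L : List (GFml κ m × GFml κ m)) : Prop :=
  (∀ p ∈ L, p.1.DependsOn {i | f i = false} ∧ p.2.DependsOn {i | f i = true}) ∧
  ∀ (V : Type) (G : SimpleGraph V) (C : κ → Set V) (v : Fin m → V), Separated G d f v →
    (θ.Sat G C v ↔ SatDNF G C L v)

namespace SplitsAs

variable {d : ℕ} {θ : GFml κ m} {f : Fin m → Bool} {L : List (GFml κ m × GFml κ m)}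

lemma mono (h : SplitsAs d θ f L) {d' : ℕ} (hd : d ≤ d') : SplitsAs d' θ f L :=
  ⟨h.1, fun V G C v hv => h.2 V G C v fun i j hi hj =>
    lt_of_le_of_lt (Nat.cast_le.mpr hd) (hv i j hi hj)⟩

lemma swap (h : SplitsAs d θ f L) : SplitsAs d θ ((!·) ∘ f) (L.map Prod.swap) := by
  refine ⟨?_, fun V G C v hv => ?_⟩
  · simp only [List.mem_map]
    rintro _ ⟨p, hp, rfl⟩
    simpa [and_comm] using h.1 p hp
  · rw [h.2 V G C v fun i j hi hj => by
      rw [G.edist_comm]; exact hv j i (by simpa using hj) (by simpa using hi)]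
    exact (satDNF_map_swap L v).symm

lemma not (h : SplitsAs d θ f L) : SplitsAs d θ.not f (negDNF L) :=
  ⟨dependsOn_negDNF L h.1, fun V G C v hv => by rw [satDNF_negDNF, sat_not, h.2 V G C v hv]⟩

lemma or {θ' : GFml κ m} {L' : List (GFml κ m × GFml κ m)} (h : SplitsAs d θ f L)
    (h' : SplitsAs d θ' f L') : SplitsAs d (θ.or θ') f (L ++ L') := by
  refine ⟨fun p hp => ?_, fun V G C v hv => ?_⟩
  · rcases List.mem_append.mp hp with hp | hp
    exacts [h.1 p hp, h'.1 p hp]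
  · rw [sat_or, satDNF_append, h.2 V G C v hv, h'.2 V G C v hv]

lemma of_dependsOn (b : Bool) (hθ : θ.DependsOn {i | f i = b}) :
    SplitsAs d θ f [cond b (top, θ) (θ, top)] := by
  cases b
  · exact ⟨by simpa using ⟨hθ, DependsOn.top⟩, fun V G C v _ => by simp [SatDNF]⟩
  · exact ⟨by simpa using ⟨DependsOn.top, hθ⟩, fun V G C v _ => by simp [SatDNF]⟩

/-- Either both variables lie on one side, or the formula fails on separated tuples. -/
lemma exists_of_dependsOn_pair {i j : Fin m} (hθ : θ.DependsOn {i, j})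
    (hnear : ∀ (V : Type) (G : SimpleGraph V) (C : κ → Set V) (v : Fin m → V),
      θ.Sat G C v → G.edist (v i) (v j) ≤ 1) :
    ∃ L, SplitsAs 1 θ f L := by
  by_cases hij : f i = f j
  · exact ⟨_, of_dependsOn (f i) (hθ.mono (by rintro k (rfl | rfl) <;> simp [hij]))⟩
  · refine ⟨[], by simp, fun V G C v hv => iff_of_false (fun hsat => ?_) (satDNF_nil v)⟩
    have hle := hnear V G C v hsat
    obtain ⟨hfi, hfj⟩ | ⟨hfi, hfj⟩ : (f i = false ∧ f j = true) ∨ (f i = true ∧ f j = false) := by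
      revert hij; cases f i <;> cases f j <;> simp
    · exact (hv i j hfi hfj).not_ge hle
    · exact (hv j i hfj hfi).not_ge (G.edist_comm ▸ hle)

lemma exNear_of_false {θ : GFml κ (m + 1)} {L : List (GFml κ (m + 1) × GFml κ (m + 1))}
    {i : Fin m} (hi : f i = false) (R : ℕ)
    (h : SplitsAs d θ (Fin.snoc f false) L) :
    SplitsAs (d + R) (exNear i R θ) f
      (L.map fun p => (exNear i R p.1, p.2.rename (Fin.snoc id i))) := by
  have hsnoc : ∀ j, (Fin.snoc f false : Fin (m + 1) → Bool) j = true →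
      ∃ j' : Fin m, j = j'.castSucc ∧ f j' = true := fun j hj => by
    induction j using Fin.lastCases with
    | last => simp at hj
    | cast j' => exact ⟨j', rfl, by simpa using hj⟩
  refine ⟨?_, fun V G C v hv => ?_⟩
  · simp only [List.mem_map]
    rintro _ ⟨p, hp, rfl⟩
    refine ⟨(h.1 p hp).1.exNear hi (fun j hj => by simpa using hj) R,
      ((h.1 p hp).2.mono fun j hj => ?_).rename⟩
    obtain ⟨j', rfl, hj'⟩ := hsnoc j hj
    simpa using hj'
  · -- the right-hand formulas do not read the new variable, so it may be replaced by `v i`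
    have hright : ∀ p ∈ L, ∀ w, p.2.Sat G C (Fin.snoc v w) ↔
        (p.2.rename (Fin.snoc id i)).Sat G C v := fun p hp w => by
      rw [sat_rename, Fin.comp_snoc, Function.comp_id]
      refine (h.1 p hp).2 V G C _ _ fun j hj => ?_
      obtain ⟨j', rfl, -⟩ := hsnoc j hj
      simp
    simp only [Sat, SatDNF, List.mem_map]
    constructor
    · rintro ⟨w, hw, hθ⟩
      obtain ⟨p, hp, h₁, h₂⟩ := (h.2 V G C _ (hv.snoc hi hw)).mp hθ
      exact ⟨_, ⟨p, hp, rfl⟩, ⟨w, hw, h₁⟩, (hright p hp w).mp h₂⟩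
    · rintro ⟨_, ⟨p, hp, rfl⟩, ⟨w, hw, h₁⟩, h₂⟩
      exact ⟨w, hw, (h.2 V G C _ (hv.snoc hi hw)).mpr ⟨p, hp, h₁, (hright p hp w).mpr h₂⟩⟩

lemma exNear {θ : GFml κ (m + 1)} {L : List (GFml κ (m + 1) × GFml κ (m + 1))} {i : Fin m}
    (R : ℕ) (h : SplitsAs d θ (Fin.snoc f (f i)) L) :
    ∃ L', SplitsAs (d + R) (exNear i R θ) f L' := by
  cases hfi : f i
  · rw [hfi] at h
    exact ⟨_, h.exNear_of_false hfi R⟩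
  · rw [hfi] at h
    have h' := h.swap
    rw [Fin.comp_snoc, Bool.not_true] at h'
    have := (h'.exNear_of_false (i := i) (by simp [hfi]) R).swap
    rw [show (!·) ∘ ((!·) ∘ f) = f from funext fun _ => by simp] at this
    exact ⟨_, this⟩

end SplitsAs

theorem exists_splitsAs (θ : GFml κ m) (f : Fin m → Bool) :
    ∃ L, SplitsAs (2 * θ.radius + 1) θ f L := by
  induction θ with
  | bot => exact ⟨[], by simp, fun V G C v _ => by simp⟩
  | eq i j =>
    obtain ⟨L, h⟩ := SplitsAs.exists_of_dependsOn_pair (θ := (eq i j : GFml κ _)) (f := f)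
      (i := i) (j := j) (fun V G C v v' hv => by simp [Sat, hv i (by simp), hv j (by simp)])
      (fun V G C v (h : v i = v j) => by simp [h])
    exact ⟨L, h.mono (by omega)⟩
  | adj i j =>
    obtain ⟨L, h⟩ := SplitsAs.exists_of_dependsOn_pair (θ := (adj i j : GFml κ _)) (f := f)
      (i := i) (j := j) (fun V G C v v' hv => by simp [Sat, hv i (by simp), hv j (by simp)])
      (fun V G C v h => SimpleGraph.edist_le_one_iff_adj_or_eq.mpr (.inl h))
    exact ⟨L, h.mono (by omega)⟩
  | col k i =>
    obtain ⟨L, h⟩ := SplitsAs.exists_of_dependsOn_pair (θ := (col k i : GFml κ _)) (f := f)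
      (i := i) (j := i) (fun V G C v v' hv => by simp [Sat, hv i (by simp)])
      (fun V G C v _ => by simp)
    exact ⟨L, h.mono (by omega)⟩
  | not θ ih =>
    obtain ⟨L, h⟩ := ih f
    exact ⟨_, h.not⟩
  | or θ₁ θ₂ ih₁ ih₂ =>
    obtain ⟨L₁, h₁⟩ := ih₁ f
    obtain ⟨L₂, h₂⟩ := ih₂ f
    exact ⟨_, (h₁.mono (by simp [radius])).or (h₂.mono (by simp [radius]))⟩
  | exNear i R θ ih =>
    obtain ⟨L, h⟩ := ih (Fin.snoc f (f i))
    obtain ⟨L', h'⟩ := h.exNear R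
    exact ⟨L', h'.mono (by simp only [radius]; omega)⟩

lemma separated_snoc_iff {V : Type} {G : SimpleGraph V} {d : ℕ} {v : Fin m → V} {w : V} :
    Separated G d (Fin.snoc (fun _ => false) true) (Fin.snoc v w) ↔ ∀ j, d < G.edist (v j) w := by
  constructor
  · intro h j
    simpa using h j.castSucc (Fin.last m) (by simp) (by simp)
  · intro h a b ha hb
    induction b using Fin.lastCases with
    | cast b => simp at hb
    | last =>
      induction a using Fin.lastCases with
      | last => simp at ha
      | cast a => simpa using h a

lemma SplitsAs.sat_snoc_iff_of_far {d : ℕ} {θ : GFml κ (m + 1)}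
    {L : List (GFml κ (m + 1) × GFml κ (m + 1))}
    (h : SplitsAs d θ (Fin.snoc (fun _ => false) true) L) {V : Type} (G : SimpleGraph V)
    (C : κ → Set V) (v : Fin m → V) {w : V} (hw : ∀ j, d < G.edist (v j) w) (u : V) :
    θ.Sat G C (Fin.snoc v w) ↔ ∃ p ∈ L, p.1.Sat G C (Fin.snoc v u) ∧ p.2.Sat G C fun _ => w := by
  rw [h.2 V G C _ (separated_snoc_iff.mpr hw)]
  refine exists_congr fun p => and_congr_right fun hp => and_congr ?_ ?_
  · refine (h.1 p hp).1 V G C _ _ fun a ha => ?_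
    induction a using Fin.lastCases with
    | last => simp at ha
    | cast a => simp
  · refine (h.1 p hp).2 V G C _ _ fun a ha => ?_
    induction a using Fin.lastCases with
    | last => simp
    | cast a => simp at ha

/-- `always` and `present i` are sentence colors: they hold everywhere or nowhere, and are read at
an arbitrary variable. -/
inductive FarColor (m : ℕ) : Type
  | witness
  | always
  | present (i : Fin m)
  | center (i : Fin m)

instance (m : ℕ) : Finite (FarColor m) :=
  Finite.of_injective (β := Bool ⊕ (Fin m ⊕ Fin m))
    (fun | .witness => .inl true | .always => .inl false
         | .present i => .inr (.inl i) | .center i => .inr (.inr i))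
    (by intro a b; cases a <;> cases b <;> simp)

def farFml (s : ℕ) {m : ℕ} (x₀ : Fin m) : GFml (FarColor m) m :=
  (col .always x₀).or <|
    (iSup fun i => (col (.present i) x₀).and <|
      iInf fun j => (exNear j (3 * s) (col (.center i) (Fin.last m))).not).or <|
    iSup fun j => exNear j (5 * s) <|
      (col .witness (Fin.last m)).and <| iInf fun j' => (near s j'.castSucc (Fin.last m)).not

variable {V : Type} (G : SimpleGraph V)

lemma sat_farFml {m : ℕ} (C : FarColor m → Set V) (s : ℕ) (x₀ : Fin m) (v : Fin m → V) :
    (farFml s x₀).Sat G C v ↔ v x₀ ∈ C .always ∨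
      (∃ i, v x₀ ∈ C (.present i) ∧ ∀ j w, G.edist (v j) w ≤ 3 * s → w ∉ C (.center i)) ∨
      ∃ j w, G.edist (v j) w ≤ 5 * s ∧ w ∈ C .witness ∧ ∀ j', s < G.edist (v j') w := by
  simp [farFml, Sat]

theorem exists_sat_farFml_iff [Finite V] (B : Set V) (s : ℕ) {m : ℕ} (x₀ : Fin m) :
    ∃ C : FarColor m → Set V, ∀ v, (farFml s x₀).Sat G C v ↔ ∃ w ∈ B, ∀ j, s < G.edist (v j) w := by
  rcases G.forall_exists_far_or_exists_centers B s m with hall | ⟨S, hcard, hSB, hcov⟩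
  · refine ⟨(fun | .witness => B | .always => .univ | .present _ => ∅ | .center _ => ∅),
      fun v => ?_⟩
    simp [sat_farFml, hall v]
  · let l := S.toList
    refine ⟨(fun
        | .witness => B
        | .always => ∅
        | .present i => {_x | ∃ c, l[(i : ℕ)]? = some c}
        | .center i => {c | l[(i : ℕ)]? = some c}), fun v => ?_⟩
    rw [sat_farFml, G.exists_far_iff_of_centers hSB hcov v]
    simp only [Finset.mem_coe, ← S.mem_toList, Set.mem_empty_iff_false, false_or,
      Set.mem_ofPred_eq]
    rw [← List.exists_fin_getElem?_iff (by simpa [l] using hcard)]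
    refine or_congr_left (exists_congr fun i => ⟨?_, ?_⟩)
    · rintro ⟨⟨c, hc⟩, hfar⟩
      exact ⟨c, hc, fun j => lt_of_not_ge fun hle => hfar j c hle hc⟩
    · rintro ⟨c, hc, hfar⟩
      refine ⟨⟨c, hc⟩, fun j w hle hw => (hfar j).not_ge ?_⟩
      rwa [Option.some_injective _ (hc.symm.trans hw)]

theorem exists_sat_iff_exists_sat_snoc {κ : Type} {m : ℕ} (θ : GFml κ (m + 1)) (x₀ : Fin m) :
    ∃ (κ' : Type) (_ : Finite κ') (ψ : GFml (κ ⊕ κ') m),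
      ∀ (V : Type) [Finite V] (G : SimpleGraph V) (C : κ → Set V), ∃ C' : κ' → Set V,
        ∀ v, ψ.Sat G (Sum.elim C C') v ↔ ∃ w, θ.Sat G C (Fin.snoc v w) := by
  set s := 2 * θ.radius + 1
  obtain ⟨L, hL⟩ := exists_splitsAs θ (Fin.snoc (fun _ => false) true)
  -- witnesses within `s` of the tuple are reached by guarded quantifiers; farther away `θ` splits
  -- into `⋁ₖ αₖ ∧ βₖ`, and far witnesses of `βₖ` are detected by `farFml` with colors `(k, _)`
  let near : GFml (κ ⊕ (Fin L.length × FarColor m)) m :=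
    iSup fun j => exNear j s (θ.recolor Sum.inl)
  let far : GFml (κ ⊕ (Fin L.length × FarColor m)) m := iSup fun k =>
    (((L.get k).1.rename (Fin.snoc id x₀)).recolor Sum.inl).and
      ((farFml s x₀).recolor fun c => Sum.inr (k, c))
  refine ⟨Fin L.length × FarColor m, inferInstance, near.or far, fun V _ G C => ?_⟩
  choose C' hC' using fun k : Fin L.length =>
    exists_sat_farFml_iff G {w | (L.get k).2.Sat G C fun _ => w} s x₀
  refine ⟨fun kc => C' kc.1 kc.2, fun v => ?_⟩
  have hsat_far : far.Sat G (Sum.elim C fun kc => C' kc.1 kc.2) v ↔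
      ∃ k, (L.get k).1.Sat G C (Fin.snoc v (v x₀)) ∧
        ∃ w, (L.get k).2.Sat G C (fun _ => w) ∧ ∀ j, s < G.edist (v j) w := by
    simp only [far, sat_iSup, sat_and, sat_recolor, sat_rename, Sum.elim_comp_inl, Fin.comp_snoc,
      Function.comp_id]
    exact exists_congr fun k => and_congr_right fun _ => hC' k v
  simp only [near, sat_iSup, Sat, sat_recolor, Sum.elim_comp_inl, hsat_far]
  constructor
  · rintro (⟨j, w, -, hθ⟩ | ⟨k, hk, w, hw, hwfar⟩)
    · exact ⟨w, hθ⟩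
    · exact ⟨w, (hL.sat_snoc_iff_of_far G C v hwfar (v x₀)).mpr ⟨L.get k, L.get_mem k, hk, hw⟩⟩
  · rintro ⟨w, hθ⟩
    by_cases hwfar : ∀ j, s < G.edist (v j) w
    · obtain ⟨p, hp, hp₁, hp₂⟩ := (hL.sat_snoc_iff_of_far G C v hwfar (v x₀)).mp hθ
      obtain ⟨k, rfl⟩ := List.get_of_mem hp
      exact Or.inr ⟨k, hp₁, w, hp₂, hwfar⟩
    · push Not at hwfar
      obtain ⟨j, hj⟩ := hwfar
      exact Or.inl ⟨j, w, hj, hθ⟩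

end GFml

theorem Fml.exists_gfml_sat_iff {c m : ℕ} (φ : Fml c m) (hm : 0 < m) :
    ∃ (κ : Type) (_ : Finite κ) (ψ : GFml (Fin c ⊕ κ) m),
      ∀ A : CGraph c, ∃ C : κ → Set A.V,
        ∀ v, ψ.Sat A.G (Sum.elim A.color C) v ↔ Fml.Sat A φ v := by
  induction φ with
  | eq i j => exact ⟨Empty, inferInstance, .eq i j, fun A => ⟨isEmptyElim, fun v => Iff.rfl⟩⟩
  | adj i j => exact ⟨Empty, inferInstance, .adj i j, fun A => ⟨isEmptyElim, fun v => Iff.rfl⟩⟩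
  | col k i =>
    exact ⟨Empty, inferInstance, .col (.inl k) i, fun A => ⟨isEmptyElim, fun v => Iff.rfl⟩⟩
  | not φ ih =>
    obtain ⟨κ, _, ψ, hψ⟩ := ih hm
    refine ⟨κ, inferInstance, ψ.not, fun A => ?_⟩
    obtain ⟨C, hC⟩ := hψ A
    exact ⟨C, fun v => not_congr (hC v)⟩
  | or φ₁ φ₂ ih₁ ih₂ =>
    obtain ⟨κ₁, _, ψ₁, hψ₁⟩ := ih₁ hm
    obtain ⟨κ₂, _, ψ₂, hψ₂⟩ := ih₂ hm
    refine ⟨κ₁ ⊕ κ₂, inferInstance,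
      (ψ₁.recolor (Sum.map id .inl)).or (ψ₂.recolor (Sum.map id .inr)), fun A => ?_⟩
    obtain ⟨C₁, hC₁⟩ := hψ₁ A
    obtain ⟨C₂, hC₂⟩ := hψ₂ A
    refine ⟨Sum.elim C₁ C₂, fun v => ?_⟩
    rw [GFml.sat_or, GFml.sat_recolor, GFml.sat_recolor, Sum.elim_comp_map, Sum.elim_comp_map,
      Function.comp_id, Sum.elim_comp_inl, Sum.elim_comp_inr, hC₁, hC₂]
    rfl
  | ex φ ih =>
    obtain ⟨κ₁, _, ψ₁, hψ₁⟩ := ih (Nat.succ_pos _)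
    obtain ⟨κ₂, _, ψ, hψ⟩ := ψ₁.exists_sat_iff_exists_sat_snoc ⟨0, hm⟩
    refine ⟨κ₁ ⊕ κ₂, inferInstance, ψ.recolor (Equiv.sumAssoc _ _ _), fun A => ?_⟩
    obtain ⟨C₁, hC₁⟩ := hψ₁ A
    obtain ⟨C₂, hC₂⟩ := hψ _ A.G (Sum.elim A.color C₁)
    refine ⟨Sum.elim C₁ C₂, fun v => ?_⟩
    have hcolors : Sum.elim A.color (Sum.elim C₁ C₂) ∘ Equiv.sumAssoc _ _ _ =
        Sum.elim (Sum.elim A.color C₁) C₂ := by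
      funext x
      rcases x with (x | x) | x <;> rfl
    rw [GFml.sat_recolor, hcolors, hC₂]
    exact exists_congr fun w => hC₁ _

namespace Fml

def and {c m : ℕ} (φ ψ : Fml c m) : Fml c m := .not (.or (.not φ) (.not ψ))

@[simp] lemma sat_and {c m : ℕ} (A : CGraph c) (φ ψ : Fml c m) (v : Fin m → A.V) :
    Sat A (φ.and ψ) v ↔ Sat A φ v ∧ Sat A ψ v := by
  simp [Fml.and, Sat]

def distLE (c : ℕ) : ℕ → {m : ℕ} → Fin m → Fin m → Fml c m
  | 0, _, a, b => .eq a b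
  | R + 1, m, a, b =>
    .ex <| (Fml.or (.adj a.castSucc (Fin.last m)) (.eq a.castSucc (Fin.last m))).and
      (distLE c R (Fin.last m) b.castSucc)

lemma sat_distLE {c : ℕ} (A : CGraph c) (R : ℕ) {m : ℕ} (a b : Fin m) (v : Fin m → A.V) :
    Sat A (distLE c R a b) v ↔ A.G.edist (v a) (v b) ≤ R := by
  induction R generalizing m with
  | zero => simp [distLE, Sat]
  | succ R ih =>
    simp only [distLE, Sat, sat_and, ih, Nat.cast_add, Nat.cast_one,
      SimpleGraph.edist_le_succ_iff, SimpleGraph.edist_le_one_iff_adj_or_eq]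
    simp

end Fml

namespace GFml

variable {κ : Type} {c : ℕ}

def toFml (e : κ → Fin c) : {m : ℕ} → GFml κ m → Fml c m
  | m, bot => .ex (.not (.eq (Fin.last m) (Fin.last m)))
  | _, eq i j => .eq i j
  | _, adj i j => .adj i j
  | _, col k i => .col (e k) i
  | _, not θ => .not (toFml e θ)
  | _, or θ₁ θ₂ => .or (toFml e θ₁) (toFml e θ₂)
  | m, exNear i R θ => .ex ((Fml.distLE c R i.castSucc (Fin.last m)).and (toFml e θ))

lemma sat_toFml (e : κ → Fin c) (A : CGraph c) {m : ℕ} (θ : GFml κ m) (v : Fin m → A.V) :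
    Fml.Sat A (toFml e θ) v ↔ θ.Sat A.G (A.color ∘ e) v := by
  induction θ with
  | exNear i R θ ih => simp [toFml, Fml.Sat, Sat, Fml.sat_distLE, ih]
  | _ => simp_all [toFml, Fml.Sat, Sat]

lemma isLocalFml_toFml (e : κ → Fin c) {m : ℕ} (θ : GFml κ m) :
    IsLocalFml θ.radius (toFml e θ) := fun A v =>
  let u : Fin m → ballSet A.G θ.radius (Set.range v) :=
    fun i => ⟨v i, mem_ballSet_self A.G _ (Set.mem_range_self i)⟩
  (sat_toFml e A θ v).trans <| (sat_induce A.G (A.color ∘ e) θ u subset_rfl).symm.trans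
    (sat_toFml e (A.induce _) θ u).symm

def symmetrize (θ : GFml κ 2) : GFml κ 2 := (eq 0 1).not.and (θ.or (θ.rename ![1, 0]))

lemma sat_symmetrize {V : Type} (G : SimpleGraph V) (C : κ → Set V) (θ : GFml κ 2) (u w : V) :
    θ.symmetrize.Sat G C ![u, w] ↔ u ≠ w ∧ (θ.Sat G C ![u, w] ∨ θ.Sat G C ![w, u]) := by
  have hswap : (![u, w] ∘ ![1, 0] : Fin 2 → V) = ![w, u] := by
    funext i
    fin_cases i <;> rfl
  simp [symmetrize, Sat, sat_rename, hswap]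

def interp (e : κ → Fin c) (M : Fin c) (θ : GFml κ 2) : Interp c where
  ν := .col M 0
  η := toFml e θ.symmetrize
  symm A u w := by
    simp only [sat_toFml, sat_symmetrize]
    exact fun ⟨hne, h⟩ => ⟨hne.symm, h.symm⟩
  irrefl A u := by simp [sat_toFml, sat_symmetrize]

end GFml

lemma Interp.sat_η_iff_symmetrized {c : ℕ} (I : Interp c) (A : CGraph c) (u w : A.V) :
    (u ≠ w ∧ (Fml.Sat A I.η ![u, w] ∨ Fml.Sat A I.η ![w, u])) ↔ Fml.Sat A I.η ![u, w] := by
  refine ⟨fun ⟨_, h⟩ => h.elim id (I.symm A w u), fun h => ⟨?_, Or.inl h⟩⟩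
  rintro rfl
  exact I.irrefl A u h

theorem Transduction.exists_local_subsumes (T : Transduction) :
    ∃ T' : Transduction, T'.k = T.k ∧ (∃ M : Fin T'.c, T'.I.ν = Fml.col M 0) ∧
      (∃ r : ℕ, IsLocalFml r T'.I.η) ∧ Subsumes T' T := by
  obtain ⟨κ, _, ψ, hψ⟩ := T.I.η.exists_gfml_sat_iff two_pos
  let e := Finite.equivFin (Option (Fin T.c ⊕ κ))
  let T' : Transduction := ⟨T.k, T.kpos, _, GFml.interp (e ∘ some) (e none) ψ⟩
  refine ⟨T', rfl, ⟨_, rfl⟩, ⟨_, GFml.isLocalFml_toFml _ _⟩, ?_⟩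
  rintro G H ⟨color, ⟨iso⟩⟩
  let A := T.copyCGraph G color
  obtain ⟨C, hC⟩ := hψ A
  let color' : Fin _ → Set A.V :=
    fun i => (e.symm i).elim {x | Fml.Sat A T.I.ν ![x]} (Sum.elim A.color C)
  have hcolors : color' ∘ e ∘ some = Sum.elim A.color C := by
    funext x
    simp [color']
  refine ⟨color', ⟨iso.trans ⟨Equiv.subtypeEquivRight fun x => ?_, fun {a b} => ?_⟩⟩⟩
  · change Fml.Sat A T.I.ν ![x] ↔ x ∈ color' (e none)
    simp only [color', Equiv.symm_apply_apply, Option.elim_none]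
    rfl
  · change Fml.Sat (T'.copyCGraph G color') (GFml.toFml (e ∘ some) ψ.symmetrize) ![a.1, b.1] ↔
      Fml.Sat A T.I.η ![a.1, b.1]
    rw [GFml.sat_toFml]
    change GFml.Sat A.G (color' ∘ e ∘ some) ψ.symmetrize ![(a.1 : A.V), b.1] ↔ _
    rw [hcolors, GFml.sat_symmetrize, hC, hC]
    exact T.I.sat_η_iff_symmetrized A a.1 b.1

theorem local_form_for_noncopying_transductions (T : Transduction) (hT : T.k = 1) :
    ∃ T' : Transduction, T'.k = 1 ∧
      (∃ M : Fin T'.c, T'.I.ν = Fml.col M 0) ∧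
      (∃ r : ℕ, IsLocalFml r T'.I.η) ∧
      Subsumes T' T := by
  obtain ⟨T', hk, hν, hη, hT'⟩ := T.exists_local_subsumes
  exact ⟨T', hk.trans hT, hν, hη, hT'⟩
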